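/- arXiv:0903.4847 — 2 statements merged into one kernel-verified Lean document; each statement's English description precedes it below -/
import Mathlib

section
/- Let F : Σ → P(Σ) be an upper semicontinuous set-valued map on a compact convex set Σ ⊂ ℝⁿ with nonempty closed convex values contained in Σ. Then for every initial point p₀ ∈ Σ the differential inclusion dp/dt ∈ F(p) − p admits at least one Lipschitz continuous solution p : [0,∞) → Σ with p(0) = p₀. -/
/-!
Euler polygons `x_{j+1} = x_j + ε (g x_j - x_j)` for a selection `g` of `F` stay in `Σ` and are
`diam Σ`-Lipschitz; by Tychonoff they converge pointwise along an ultrafilter to a Lipschitz `p`,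
which is differentiable almost everywhere. A right difference quotient of a polygon is a convex
combination of its velocities `g x_j - x_j` at nodes near the starting point, so `p'(t)` lies in the
closed convex hull of the velocities `w - z`, `w ∈ F z`, `z` near `p t`, for every radius. Because
the graph of `F` is compact and `F (p t)` is convex, separating by hyperplanes shows that this
intersection lies in `F (p t) - p t`.
-/

open Set Filter Topology AffineMap Metric

section EulerPolygon

variable {E : Type*} [NormedAddCommGroup E] [NormedSpace ℝ E] (g : E → E) (ε : ℝ) (x₀ : E)

noncomputable def eulerNode : ℕ → E
  | 0 => x₀
  | j + 1 => lineMap (eulerNode j) (g (eulerNode j)) ε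

noncomputable def eulerPolygon (t : ℝ) : E :=
  lineMap (eulerNode g ε x₀ ⌊t / ε⌋₊) (g (eulerNode g ε x₀ ⌊t / ε⌋₊)) (t - ⌊t / ε⌋₊ * ε)

variable {g ε x₀}

theorem eulerNode_mem {s : Set E} (hs : Convex ℝ s) (hgs : MapsTo g s s) (hx₀ : x₀ ∈ s)
    (hε : ε ∈ Icc 0 1) (j : ℕ) : eulerNode g ε x₀ j ∈ s := by
  induction j with
  | zero => exact hx₀
  | succ j ih => exact hs.lineMap_mem ih (hgs ih) hε

theorem norm_sub_eulerNode_le_diam {s : Set E} (hs : Bornology.IsBounded s) (hsc : Convex ℝ s)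
    (hgs : MapsTo g s s) (hx₀ : x₀ ∈ s) (hε : ε ∈ Icc 0 1) (j : ℕ) :
    ‖g (eulerNode g ε x₀ j) - eulerNode g ε x₀ j‖ ≤ diam s := by
  have hx := eulerNode_mem hsc hgs hx₀ hε j
  exact dist_eq_norm (g _) _ ▸ dist_le_diam_of_mem hs (hgs hx) hx

theorem eulerPolygon_eq_lineMap (hε : 0 < ε) {j : ℕ} {t : ℝ} (hjt : j * ε ≤ t)
    (htj : t ≤ (j + 1) * ε) :
    eulerPolygon g ε x₀ t = lineMap (eulerNode g ε x₀ j) (g (eulerNode g ε x₀ j)) (t - j * ε) := by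
  rcases htj.lt_or_eq with htj | rfl
  · have hfloor : ⌊t / ε⌋₊ = j :=
      (Nat.floor_eq_iff (div_nonneg ((by positivity : (0 : ℝ) ≤ j * ε).trans hjt) hε.le)).2
        ⟨(le_div_iff₀ hε).2 hjt, (div_lt_iff₀ hε).2 htj⟩
    rw [eulerPolygon, hfloor]
  · have hfloor : ⌊((j : ℝ) + 1) * ε / ε⌋₊ = j + 1 := by
      rw [mul_div_cancel_right₀ _ hε.ne']; exact_mod_cast Nat.floor_natCast (j + 1)
    rw [eulerPolygon, hfloor, eulerNode]
    push_cast
    simp only [sub_self, lineMap_apply_zero]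
    ring_nf

theorem eulerPolygon_natCast_mul (hε : 0 < ε) (j : ℕ) :
    eulerPolygon g ε x₀ (j * ε) = eulerNode g ε x₀ j := by
  rw [eulerPolygon_eq_lineMap hε le_rfl (by nlinarith), sub_self, lineMap_apply_zero]

theorem eulerPolygon_mem {s : Set E} (hs : Convex ℝ s) (hgs : MapsTo g s s) (hx₀ : x₀ ∈ s)
    (hε : ε ∈ Ioc 0 1) {t : ℝ} (ht : 0 ≤ t) : eulerPolygon g ε x₀ t ∈ s := by
  have h₁ : ⌊t / ε⌋₊ * ε ≤ t := (le_div_iff₀ hε.1).1 (Nat.floor_le (div_nonneg ht hε.1.le))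
  have h₂ : t < (⌊t / ε⌋₊ + 1) * ε := (div_lt_iff₀ hε.1).1 (Nat.lt_floor_add_one _)
  have hnode := eulerNode_mem hs hgs hx₀ (Ioc_subset_Icc_self hε) ⌊t / ε⌋₊
  exact hs.lineMap_mem hnode (hgs hnode) ⟨by linarith, by linarith [hε.2]⟩

theorem slope_eulerPolygon_of_cell (hε : 0 < ε) {j : ℕ} {a b : ℝ} (hja : j * ε ≤ a)
    (hab : a < b) (hbj : b ≤ (j + 1) * ε) :
    slope (eulerPolygon g ε x₀) a b = g (eulerNode g ε x₀ j) - eulerNode g ε x₀ j := by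
  rw [slope_def_module, eulerPolygon_eq_lineMap hε hja (by linarith),
    eulerPolygon_eq_lineMap hε (by linarith) hbj, lineMap_apply_module', lineMap_apply_module',
    add_sub_add_right_eq_sub, ← sub_smul, sub_sub_sub_cancel_right,
    inv_smul_smul₀ (sub_ne_zero.2 hab.ne')]

theorem slope_eulerPolygon_mem_convexHull (hε : 0 < ε) {S : Set E} {a b : ℝ} (ha : 0 ≤ a)
    (hab : a < b) (hS : ∀ j : ℕ, j * ε < b → a < (j + 1) * ε →
      g (eulerNode g ε x₀ j) - eulerNode g ε x₀ j ∈ S) :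
    slope (eulerPolygon g ε x₀) a b ∈ convexHull ℝ S := by
  suffices key : ∀ N : ℕ, ∀ a, 0 ≤ a → a < b → b ≤ (⌊a / ε⌋₊ + N) * ε →
      (∀ j : ℕ, j * ε < b → a < (j + 1) * ε → g (eulerNode g ε x₀ j) - eulerNode g ε x₀ j ∈ S) →
      slope (eulerPolygon g ε x₀) a b ∈ convexHull ℝ S by
    refine key ⌈b / ε⌉₊ a ha hab ?_ hS
    have := (div_le_iff₀ hε).1 (Nat.le_ceil (b / ε))
    nlinarith [(Nat.cast_nonneg ⌊a / ε⌋₊ : (0 : ℝ) ≤ _)]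
  intro N
  induction N with
  | zero =>
    intro a ha hab hb _
    have := (le_div_iff₀ hε).1 (Nat.floor_le (div_nonneg ha hε.le))
    push_cast at hb
    linarith
  | succ N ih =>
    intro a ha hab hb hS
    set j := ⌊a / ε⌋₊
    have hja : j * ε ≤ a := (le_div_iff₀ hε).1 (Nat.floor_le (div_nonneg ha hε.le))
    have haj : a < (j + 1) * ε := (div_lt_iff₀ hε).1 (Nat.lt_floor_add_one _)
    rcases le_or_gt b ((j + 1) * ε) with hbj | hjb
    · rw [slope_eulerPolygon_of_cell hε hja hab hbj]
      exact subset_convexHull ℝ S (hS j (by linarith) haj)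
    · have hleft : slope (eulerPolygon g ε x₀) a ((j + 1) * ε) ∈ convexHull ℝ S := by
        rw [slope_eulerPolygon_of_cell hε hja haj le_rfl]
        exact subset_convexHull ℝ S (hS j (by linarith) haj)
      have hfloor : ⌊((j : ℝ) + 1) * ε / ε⌋₊ = j + 1 := by
        rw [mul_div_cancel_right₀ _ hε.ne']; exact_mod_cast Nat.floor_natCast (j + 1)
      have hright : slope (eulerPolygon g ε x₀) ((j + 1) * ε) b ∈ convexHull ℝ S :=
        ih _ (by positivity) hjb (by rw [hfloor]; push_cast at hb ⊢; linarith)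
          fun i hib hai => hS i hib (by linarith)
      rw [← lineMap_slope_slope_sub_div_sub _ a ((j + 1) * ε) b hab.ne]
      exact (convex_convexHull ℝ S).lineMap_mem hleft hright
        ⟨div_nonneg (by linarith) (by linarith), div_le_one_of_le₀ (by linarith) (by linarith)⟩

theorem lipschitzOnWith_eulerPolygon (hε : 0 < ε) {C : NNReal}
    (hC : ∀ j, ‖g (eulerNode g ε x₀ j) - eulerNode g ε x₀ j‖ ≤ C) :
    LipschitzOnWith C (eulerPolygon g ε x₀) (Ici 0) := by
  have key : ∀ a b, 0 ≤ a → a < b →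
      dist (eulerPolygon g ε x₀ b) (eulerPolygon g ε x₀ a) ≤ C * dist b a := by
    intro a b ha hab
    have hslope : slope (eulerPolygon g ε x₀) a b ∈ closedBall 0 C :=
      (convex_closedBall 0 C).convexHull_subset_iff.2 (fun v hv => hv)
        (slope_eulerPolygon_mem_convexHull hε ha hab fun j _ _ =>
          mem_closedBall_zero_iff.2 (hC j))
    rw [dist_eq_norm, ← vsub_eq_sub, ← sub_smul_slope, norm_smul, Real.dist_eq, Real.norm_eq_abs,
      mul_comm]
    exact mul_le_mul_of_nonneg_right (mem_closedBall_zero_iff.1 hslope) (abs_nonneg _)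
  refine LipschitzOnWith.of_dist_le_mul fun a ha b hb => ?_
  rcases lt_trichotomy a b with hab | rfl | hab
  · rw [dist_comm, dist_comm a]; exact key a b ha hab
  · simp
  · exact key b a hb hab

theorem slope_eulerPolygon_mem_convexHull_near (hε : 0 < ε) {C : NNReal}
    (hC : ∀ j, ‖g (eulerNode g ε x₀ j) - eulerNode g ε x₀ j‖ ≤ C) {a b : ℝ} (ha : 0 ≤ a)
    (hab : a < b) :
    slope (eulerPolygon g ε x₀) a b ∈ convexHull ℝ ((fun x => g x - x) ''
      {x ∈ range (eulerNode g ε x₀) | dist x (eulerPolygon g ε x₀ a) ≤ C * (b - a + ε)}) := by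
  refine slope_eulerPolygon_mem_convexHull hε ha hab fun j hjb haj => ⟨_, ⟨⟨j, rfl⟩, ?_⟩, rfl⟩
  rw [← eulerPolygon_natCast_mul hε]
  refine ((lipschitzOnWith_eulerPolygon hε hC).dist_le_mul _ (mem_Ici.2 (by positivity)) a
    ha).trans ?_
  gcongr
  rw [Real.dist_eq, abs_le]
  constructor <;> linarith

theorem exists_tendsto_eulerPolygon {s : Set E} (hs : IsCompact s) (hsc : Convex ℝ s)
    (hgs : MapsTo g s s) (hx₀ : x₀ ∈ s) {ι : Type*} (U : Ultrafilter ι) {ε : ι → ℝ}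
    (hε : ∀ k, ε k ∈ Ioc 0 1) :
    ∃ p : ℝ → E, (∀ t, p t ∈ s) ∧ LipschitzWith ⟨diam s, diam_nonneg⟩ p ∧ p 0 = x₀ ∧
      ∀ t, 0 ≤ t → Tendsto (fun k => eulerPolygon g (ε k) x₀ t) U (𝓝 (p t)) := by
  set P : ι → ℝ → E := fun k t => eulerPolygon g (ε k) x₀ (max t 0)
  obtain ⟨p, hps, hp⟩ : ∃ p ∈ univ.pi fun _ => s, Tendsto P U (𝓝 p) :=
    (isCompact_univ_pi fun _ => hs).ultrafilter_le_nhds (U.map P) <| le_principal_iff.2 <|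
      mem_map.2 <| univ_mem' fun k t _ => eulerPolygon_mem hsc hgs hx₀ (hε k) (le_max_right t 0)
  have hmax : MapsTo (fun t : ℝ => max t 0) univ (Ici 0) := fun t _ => le_max_right t 0
  have hP : ∀ k, LipschitzWith ⟨diam s, diam_nonneg⟩ (P k) := fun k =>
    lipschitzOnWith_univ.1 <| mul_one (⟨diam s, diam_nonneg⟩ : NNReal) ▸
      (lipschitzOnWith_eulerPolygon (hε k).1 (norm_sub_eulerNode_le_diam hs.isBounded hsc hgs hx₀
        (Ioc_subset_Icc_self (hε k)))).comp (LipschitzWith.id.max_const 0).lipschitzOnWith hmax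
  have hpt : ∀ t, 0 ≤ t → Tendsto (fun k => eulerPolygon g (ε k) x₀ t) U (𝓝 (p t)) :=
    fun t ht => by simpa [P, max_eq_left ht] using tendsto_pi_nhds.1 hp t
  refine ⟨p, fun t => hps t trivial,
    (isClosed_setOfPred_lipschitzWith _).mem_of_tendsto hp (.of_forall hP),
    tendsto_nhds_unique (hpt 0 le_rfl) ?_, hpt⟩
  simpa using tendsto_const_nhds.congr fun k =>
    (eulerPolygon_natCast_mul (g := g) (x₀ := x₀) (hε k).1 0).symm

theorem HasDerivAt.mem_closure_convexHull_of_tendsto_eulerPolygon {ι : Type*} {l : Filter ι}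
    [l.NeBot] {ε : ι → ℝ} (hε : ∀ k, 0 < ε k) (hε₀ : Tendsto ε l (𝓝 0)) {C : NNReal}
    (hC : ∀ k j, ‖g (eulerNode g (ε k) x₀ j) - eulerNode g (ε k) x₀ j‖ ≤ C) {p : ℝ → E}
    (hp : ∀ t, 0 ≤ t → Tendsto (fun k => eulerPolygon g (ε k) x₀ t) l (𝓝 (p t)))
    {t : ℝ} {d : E} (hd : HasDerivAt p d t) (ht : 0 ≤ t) {δ : ℝ} (hδ : 0 < δ) :
    d ∈ closure (convexHull ℝ ((fun x => g x - x) ''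
      ((⋃ k, range (eulerNode g (ε k) x₀)) ∩ ball (p t) δ))) := by
  have hK := isClosed_closure (s := convexHull ℝ ((fun x => g x - x) ''
      ((⋃ k, range (eulerNode g (ε k) x₀)) ∩ ball (p t) δ)))
  refine hK.mem_of_tendsto ((hasDerivAt_iff_tendsto_slope.1 hd).mono_left (nhdsGT_le_nhdsNE t)) ?_
  have hb : ∀ᶠ b in 𝓝[>] t, C * (b - t) < δ / 3 :=
    nhdsWithin_le_nhds <| Tendsto.eventually_lt_const (by positivity)
      (by simpa using ((continuous_sub_right t).tendsto t).const_mul (C : ℝ))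
  have hk : ∀ᶠ k in l, C * ε k < δ / 3 :=
    Tendsto.eventually_lt_const (by positivity) (by simpa using hε₀.const_mul (C : ℝ))
  have hpk : ∀ᶠ k in l, dist (eulerPolygon g (ε k) x₀ t) (p t) < δ / 3 :=
    Metric.tendsto_nhds.1 (hp t ht) _ (by positivity)
  filter_upwards [hb, self_mem_nhdsWithin] with b hb (htb : t < b)
  refine hK.mem_of_tendsto (by simpa only [slope_def_module] using
    ((hp b (ht.trans htb.le)).sub (hp t ht)).const_smul (b - t)⁻¹) ?_
  filter_upwards [hk, hpk] with k hk hpk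
  refine subset_closure <|
    convexHull_mono ?_ (slope_eulerPolygon_mem_convexHull_near (hε k) (hC k) ht htb)
  rintro _ ⟨x, ⟨⟨j, rfl⟩, hx⟩, rfl⟩
  refine ⟨_, ⟨mem_iUnion.2 ⟨k, j, rfl⟩, mem_ball.2 ?_⟩, rfl⟩
  calc dist (eulerNode g (ε k) x₀ j) (p t)
      ≤ dist (eulerNode g (ε k) x₀ j) (eulerPolygon g (ε k) x₀ t)
        + dist (eulerPolygon g (ε k) x₀ t) (p t) := dist_triangle _ _ _
    _ < δ := by linarith

end EulerPolygon

section Graph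

variable {E : Type*} [NormedAddCommGroup E] [NormedSpace ℝ E]

/-- If `d` is not in the compact convex fiber `G_c - c`, a hyperplane separates them, and the
points of `G` on the far side form a compact set whose projection stays away from `c`. -/
theorem IsCompact.mk_add_mem_of_forall_mem_closure_convexHull {G : Set (E × E)}
    (hG : IsCompact G) {c d : E} (hc : Convex ℝ (Prod.mk c ⁻¹' G))
    (hd : ∀ δ > 0,
      d ∈ closure (convexHull ℝ ((fun q => q.2 - q.1) '' {q ∈ G | dist q.1 c < δ}))) :
    (c, c + d) ∈ G := by
  set V := (fun w => -c + w) '' (Prod.mk c ⁻¹' G)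
  have hV : IsCompact V :=
    ((hG.image continuous_snd).of_isClosed_subset (hG.isClosed.preimage (.prodMk_right c))
      fun w hw => ⟨(c, w), hw, rfl⟩).image (continuous_const_add _)
  by_contra hcd
  have hdV : d ∉ V := by
    rintro ⟨w, hw, rfl⟩
    exact hcd (by rwa [add_neg_cancel_left])
  obtain ⟨f, u, hfV, hud⟩ :=
    geometric_hahn_banach_closed_point (hc.translate (-c)) hV.isClosed hdV
  set B := {q ∈ G | u ≤ f (q.2 - q.1)}
  have hB : IsCompact (Prod.fst '' B) :=
    (hG.of_isClosed_subset (hG.isClosed.inter (isClosed_le continuous_const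
      (f.continuous.comp (continuous_snd.sub continuous_fst)))) inter_subset_left).image
        continuous_fst
  have hcB : c ∉ Prod.fst '' B := by
    rintro ⟨⟨z, w⟩, ⟨hq, hu⟩, rfl⟩
    exact (hfV _ ⟨w, hq, neg_add_eq_sub z w⟩).not_ge hu
  obtain ⟨δ, hδ, hball⟩ := Metric.isOpen_iff.1 hB.isClosed.isOpen_compl c hcB
  have hhalf : closure (convexHull ℝ ((fun q => q.2 - q.1) '' {q ∈ G | dist q.1 c < δ})) ⊆
      {y | f y ≤ u} := by
    refine closure_minimal (convexHull_min ?_ (convex_halfSpace_le f.toLinearMap.isLinear u))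
      (isClosed_le f.continuous continuous_const)
    rintro _ ⟨q, ⟨hq, hqc⟩, rfl⟩
    by_contra h
    exact hball (mem_ball.2 hqc) ⟨q, ⟨hq, le_of_not_ge h⟩, rfl⟩
  exact (hhalf (hd δ hδ)).not_gt hud

end Graph

open MeasureTheory in
theorem aubin_cellina_existence_general (n : ℕ) (Sig : Set (Fin n → ℝ))
    (hcomp : IsCompact Sig) (hconv : Convex ℝ Sig)
    (F : (Fin n → ℝ) → Set (Fin n → ℝ))
    (hne : ∀ p ∈ Sig, (F p).Nonempty)
    (hcv : ∀ p ∈ Sig, Convex ℝ (F p))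
    (hsub : ∀ p ∈ Sig, F p ⊆ Sig)
    (husc : IsClosed {q : (Fin n → ℝ) × (Fin n → ℝ) | q.1 ∈ Sig ∧ q.2 ∈ F q.1})
    (p₀ : Fin n → ℝ) (hp₀ : p₀ ∈ Sig) :
    ∃ (p : ℝ → Fin n → ℝ) (K : NNReal),
      LipschitzOnWith K p (Set.Ici 0) ∧ p 0 = p₀ ∧
      (∀ t ∈ Set.Ici (0 : ℝ), p t ∈ Sig) ∧
      ∀ᵐ t ∂(volume.restrict (Set.Ici (0 : ℝ))),
        ∃ v ∈ F (p t), HasDerivAt p (v - p t) t := by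
  choose! g hg using hne
  have hgSig : MapsTo g Sig Sig := fun x hx => hsub x hx (hg x hx)
  have hε : ∀ k : ℕ, 1 / ((k : ℝ) + 1) ∈ Ioc 0 1 := fun k =>
    ⟨by positivity, div_le_one_of_le₀ (by simp) (by positivity)⟩
  have hnode : ∀ (k : ℕ) j, eulerNode g (1 / ((k : ℝ) + 1)) p₀ j ∈ Sig := fun k =>
    eulerNode_mem hconv hgSig hp₀ (Ioc_subset_Icc_self (hε k))
  obtain ⟨p, hpSig, hlip, hp0, hp⟩ :=
    exists_tendsto_eulerPolygon hcomp hconv hgSig hp₀ (Ultrafilter.of atTop) hε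
  refine ⟨p, _, hlip.lipschitzOnWith, hp0, fun t _ => hpSig t, ?_⟩
  filter_upwards [ae_restrict_of_ae hlip.ae_differentiableAt_real,
    ae_restrict_mem measurableSet_Ici] with t hdiff ht
  refine ⟨p t + deriv p t, ?_, by simpa using hdiff.hasDerivAt⟩
  set G := {q : (Fin n → ℝ) × (Fin n → ℝ) | q.1 ∈ Sig ∧ q.2 ∈ F q.1}
  have hG : IsCompact G :=
    (hcomp.prod hcomp).of_isClosed_subset husc fun q hq => ⟨hq.1, hsub _ hq.1 hq.2⟩
  have hfiber : Prod.mk (p t) ⁻¹' G = F (p t) := Set.ext fun w => and_iff_right (hpSig t)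
  refine (hG.mk_add_mem_of_forall_mem_closure_convexHull (hfiber ▸ hcv _ (hpSig t))
    fun δ hδ => ?_).2
  refine closure_mono (convexHull_mono ?_) <|
    hdiff.hasDerivAt.mem_closure_convexHull_of_tendsto_eulerPolygon (fun k => (hε k).1)
      (tendsto_one_div_add_atTop_nhds_zero_nat.mono_left (Ultrafilter.of_le _))
      (fun k => norm_sub_eulerNode_le_diam hcomp.isBounded hconv hgSig hp₀
        (Ioc_subset_Icc_self (hε k))) hp ht hδ
  rintro _ ⟨x, ⟨hx, hxt⟩, rfl⟩
  obtain ⟨k, j, rfl⟩ := mem_iUnion.1 hx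
  exact ⟨(_, _), ⟨⟨hnode k j, hg _ (hnode k j)⟩, mem_ball.1 hxt⟩, rfl⟩

open MeasureTheory in
/-- Aubin–Cellina existence theorem for the best-response differential inclusion:
if `F` is an upper semicontinuous (closed graph) set-valued map on a compact
convex `Σ ⊂ ℝⁿ` with nonempty closed convex values contained in `Σ`, then for
every `p₀ ∈ Σ` the inclusion `dp/dt ∈ F(p) - p` has a Lipschitz solution
defined on `[0,∞)` staying in `Σ` and starting at `p₀`. -/
theorem aubin_cellina_existence (n : ℕ) (Sig : Set (Fin n → ℝ))
    (hcomp : IsCompact Sig) (hconv : Convex ℝ Sig)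
    (F : (Fin n → ℝ) → Set (Fin n → ℝ))
    (hne : ∀ p ∈ Sig, (F p).Nonempty)
    (hcl : ∀ p ∈ Sig, IsClosed (F p))
    (hcv : ∀ p ∈ Sig, Convex ℝ (F p))
    (hsub : ∀ p ∈ Sig, F p ⊆ Sig)
    (husc : IsClosed {q : (Fin n → ℝ) × (Fin n → ℝ) | q.1 ∈ Sig ∧ q.2 ∈ F q.1})
    (p₀ : Fin n → ℝ) (hp₀ : p₀ ∈ Sig) :
    ∃ (p : ℝ → Fin n → ℝ) (K : NNReal),
      LipschitzOnWith K p (Set.Ici 0) ∧ p 0 = p₀ ∧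
      (∀ t ∈ Set.Ici (0 : ℝ), p t ∈ Sig) ∧
      ∀ᵐ t ∂(volume.restrict (Set.Ici (0 : ℝ))),
        ∃ v ∈ F (p t), HasDerivAt p (v - p t) t :=
  aubin_cellina_existence_general n Sig hcomp hconv F hne hcv hsub husc p₀ hp₀
end

section
/- Consider the piecewise-linear planar flow where in each open quadrant the velocity is the constant unit-speed direction toward a designated target corner (clockwise spiralling as in a 2×2 fictitious play game), and let l₁, …, l₄ be the four coordinate half-axes met cyclically by the flow. Identify each half-axis with (0,∞) via distance to the origin in the adapted quadrilateral metric. Then each transition map f_m : l_m → l_{m+1} has the form r ↦ r/(1 + a_m r) for some constant a_m > 0, and consequently the first return map to l₁ is r ↦ r/(1 + a r) with a = a₁ + a₂ + a₃ + a₄ > 0; hence every orbit spirals into the origin. -/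
/-!
Measure the half-axis `lₘ` by `cₘ` times Euclidean distance. The Euclidean transition is a
central projection `r ↦ q r / (r + p)`, and in these coordinates it becomes
`r ↦ r / (1 + r / (cₘ₊₁ q))` exactly when `cₘ₊₁ q = p cₘ`. Around the cycle the four ratios
`p / q` are `d₁/e₁, e₂/d₁, d₂/e₂, e₁/d₂`, whose product is `1`, so the four conditions can be met
simultaneously. The maps `r ↦ r / (1 + a r)` compose by adding parameters, hence the `n`-th
return is `r / (1 + n a r) → 0`.
-/

open Set Filter Topology

theorem Set.EqOn.iterate_of_mapsTo {α : Type*} {f g : α → α} {s : Set α} (h : EqOn f g s)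
    (hg : MapsTo g s s) (n : ℕ) : EqOn f^[n] g^[n] s := by
  induction n with
  | zero => exact fun _ _ => rfl
  | succ n ih =>
    intro x hx
    rw [Function.iterate_succ_apply', Function.iterate_succ_apply', ih hx,
      h (hg.iterate n hx)]

namespace PlanarSpiral

noncomputable def mobius (a u : ℝ) : ℝ := u / (1 + a * u)

variable {a b r : ℝ}

lemma mobius_nonneg (ha : 0 ≤ a) (hr : 0 ≤ r) : 0 ≤ mobius a r := by
  unfold mobius; positivity

lemma mapsTo_mobius_Ici (ha : 0 ≤ a) : MapsTo (mobius a) (Ici 0) (Ici 0) :=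
  fun _ hr => mobius_nonneg ha hr

lemma mobius_mobius (ha : 0 ≤ a) (hb : 0 ≤ b) (hr : 0 ≤ r) :
    mobius b (mobius a r) = mobius (a + b) r := by
  unfold mobius
  have : 1 + a * r ≠ 0 := by positivity
  field_simp
  ring

lemma iterate_mobius (ha : 0 ≤ a) (hr : 0 ≤ r) (n : ℕ) :
    (mobius a)^[n] r = mobius (n * a) r := by
  induction n with
  | zero => simp [mobius]
  | succ n ih =>
    rw [Function.iterate_succ_apply', ih, mobius_mobius (by positivity) ha hr, Nat.cast_succ,
      add_one_mul]

lemma tendsto_iterate_mobius (ha : 0 < a) (hr : 0 < r) :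
    Tendsto (fun n : ℕ => (mobius a)^[n] r) atTop (𝓝 0) := by
  simp only [iterate_mobius ha.le hr.le, mobius]
  refine tendsto_const_nhds.div_atTop (tendsto_atTop_add_const_left _ 1 ?_)
  exact (tendsto_natCast_atTop_atTop.atTop_mul_const ha).atTop_mul_const hr

lemma scaled_projection_eq_mobius {p q c c' : ℝ} (hp : 0 < p) (hc : 0 < c) (hc' : 0 < c')
    (hcc' : c' * q = p * c) (hr : 0 < r) :
    c' * (q * (r / c) / (r / c + p)) = mobius (c' * q)⁻¹ r := by
  have hq : 0 < q := pos_of_mul_pos_right (hcc' ▸ mul_pos hp hc) hc'.le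
  unfold mobius
  field_simp
  rw [hcc']
  ring

lemma return_map_eqOn {a₁ a₂ a₃ a₄ : ℝ} (ha₁ : 0 ≤ a₁) (ha₂ : 0 ≤ a₂) (ha₃ : 0 ≤ a₃)
    (ha₄ : 0 ≤ a₄) :
    EqOn (mobius a₄ ∘ mobius a₃ ∘ mobius a₂ ∘ mobius a₁) (mobius (a₁ + a₂ + a₃ + a₄))
      (Ici 0) := by
  intro r hr
  simp only [Function.comp_apply]
  rw [mobius_mobius ha₁ ha₂ hr, mobius_mobius (by positivity) ha₃ hr,
    mobius_mobius (by positivity) ha₄ hr]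

end PlanarSpiral

open PlanarSpiral in
/-- The clockwise spiralling piecewise-linear planar flow of a 2×2
fictitious-play game, with targets at the corners `(-d₁,e₁), (-d₁,-e₂),
(d₂,-e₂), (d₂,e₁)` of a rectangle: the Euclidean transition maps between
successive half-axes are the central projections
`g₁(r) = e₁r/(r+d₁)`, `g₂(r) = d₁r/(r+e₂)`, `g₃(r) = e₂r/(r+d₂)`,
`g₄(r) = d₂r/(r+e₁)`.  There are positive scalings `c₁,…,c₄` of the four
half-axes (the adapted quadrilateral metric) in which each transition map takes
the Möbius form `r ↦ r/(1+aₘr)` with `aₘ > 0`; consequently the first return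
map to the first half-axis is `r ↦ r/(1+ar)` with `a = a₁+a₂+a₃+a₄ > 0`, and
every orbit spirals into the origin. -/
theorem planar_spiral_return_map (d₁ d₂ e₁ e₂ : ℝ)
    (hd₁ : 0 < d₁) (hd₂ : 0 < d₂) (he₁ : 0 < e₁) (he₂ : 0 < e₂) :
    ∃ c₁ c₂ c₃ c₄ a₁ a₂ a₃ a₄ : ℝ,
      0 < c₁ ∧ 0 < c₂ ∧ 0 < c₃ ∧ 0 < c₄ ∧
      0 < a₁ ∧ 0 < a₂ ∧ 0 < a₃ ∧ 0 < a₄ ∧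
      (∀ r : ℝ, 0 < r →
        c₂ * (e₁ * (r / c₁) / (r / c₁ + d₁)) = r / (1 + a₁ * r) ∧
        c₃ * (d₁ * (r / c₂) / (r / c₂ + e₂)) = r / (1 + a₂ * r) ∧
        c₄ * (e₂ * (r / c₃) / (r / c₃ + d₂)) = r / (1 + a₃ * r) ∧
        c₁ * (d₂ * (r / c₄) / (r / c₄ + e₁)) = r / (1 + a₄ * r)) ∧
      (∀ r : ℝ, 0 < r →
        ((fun u : ℝ => u / (1 + a₄ * u)) ∘ (fun u : ℝ => u / (1 + a₃ * u)) ∘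
          (fun u : ℝ => u / (1 + a₂ * u)) ∘ (fun u : ℝ => u / (1 + a₁ * u))) r =
          r / (1 + (a₁ + a₂ + a₃ + a₄) * r)) ∧
      (∀ r : ℝ, 0 < r →
        Filter.Tendsto
          (fun n : ℕ =>
            ((fun u : ℝ => u / (1 + a₄ * u)) ∘ (fun u : ℝ => u / (1 + a₃ * u)) ∘
              (fun u : ℝ => u / (1 + a₂ * u)) ∘ (fun u : ℝ => u / (1 + a₁ * u)))^[n] r)
          Filter.atTop (nhds 0)) := by
  refine ⟨1, d₁ / e₁, e₂ / e₁, d₂ / e₁, (d₁ / e₁ * e₁)⁻¹, (e₂ / e₁ * d₁)⁻¹, (d₂ / e₁ * e₂)⁻¹,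
    (1 * d₂)⁻¹, ?_⟩
  have ha : 0 < (d₁ / e₁ * e₁)⁻¹ + (e₂ / e₁ * d₁)⁻¹ + (d₂ / e₁ * e₂)⁻¹ + (1 * d₂)⁻¹ := by
    positivity
  have hF := return_map_eqOn (a₁ := (d₁ / e₁ * e₁)⁻¹) (a₂ := (e₂ / e₁ * d₁)⁻¹)
    (a₃ := (d₂ / e₁ * e₂)⁻¹) (a₄ := (1 * d₂)⁻¹) (by positivity) (by positivity) (by positivity)
    (by positivity)
  refine ⟨one_pos, by positivity, by positivity, by positivity, by positivity, by positivity,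
    by positivity, by positivity, fun r hr => ⟨?_, ?_, ?_, ?_⟩, fun r hr => hF hr.le,
    fun r hr => ?_⟩
  · exact scaled_projection_eq_mobius hd₁ one_pos (by positivity) (by field_simp) hr
  · exact scaled_projection_eq_mobius he₂ (by positivity) (by positivity) (by field_simp) hr
  · exact scaled_projection_eq_mobius hd₂ (by positivity) (by positivity) (by field_simp) hr
  · exact scaled_projection_eq_mobius he₁ (by positivity) one_pos (by field_simp) hr
  · exact (tendsto_iterate_mobius ha hr).congr fun n =>
      (hF.iterate_of_mapsTo (mapsTo_mobius_Ici ha.le) n hr.le).symm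
end
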